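/- Let M be a d₁×d₂ standard real Gaussian matrix, i.e. all entries m(a,b), (a,b) ∈ Fin d₁ × Fin d₂, are i.i.d. real Gaussian with mean 0 and variance 1. Then for every k and all index families i : Fin (2k) → Fin d₁ and j : Fin (2k) → Fin d₂, E[ ∏_{ℓ=1}^{2k} m(i_ℓ, j_ℓ) ] = ∑_{σ} ∏_{x=1}^{2k} δ(i_x, i_{σ(x)}) · δ(j_x, j_{σ(x)}), where the sum runs over all fixed-point-free involutions σ of {1,…,2k}. -/

import Mathlib

/-!
Both sides factor over the entries of the matrix. On the left, independence splits the moment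
into a product over entries `(a, b)` of `E[g ^ c]`, where `g` is standard Gaussian and `c` is
the number of indices `ℓ` with `(i ℓ, j ℓ) = (a, b)`. On the right, the product of deltas is the
indicator that `σ` only pairs indices with equal `(i ℓ, j ℓ)`, so the sum counts the pairings of
each such fibre independently. Both factors satisfy `m (c + 2) = (c + 1) * m c`, `m 0 = 1`,
`m 1 = 0`: for the Gaussian by Stein's identity, for pairings by choosing the partner of one point.
-/

open MeasureTheory ProbabilityTheory

/-- The law of a `d₁ × d₂` standard real Gaussian matrix: i.i.d. entries, each real Gaussian of
mean `0` and variance `1`. -/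
noncomputable def realGaussianMat (d₁ d₂ : ℕ) : Measure (Fin d₁ × Fin d₂ → ℝ) :=
  Measure.pi fun _ => gaussianReal 0 1

/-- The fixed-point-free involutions of `Fin n`, encoding the pairings of `{1,…,n}`. -/
def fpfInvolutions (n : ℕ) : Finset (Equiv.Perm (Fin n)) :=
  Finset.univ.filter fun σ => σ * σ = 1 ∧ ∀ x, σ x ≠ x

open Finset Equiv Real

/-- `(n - 1)‼` for even `n` and `0` for odd `n`: the number of pairings of `n` points, and the
`n`-th moment of a standard Gaussian. -/
def numPairings : ℕ → ℕ
  | 0 => 1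
  | 1 => 0
  | n + 2 => (n + 1) * numPairings n

lemma numPairings_eq_mul {n : ℕ} (hn : n ≠ 0) :
    numPairings n = (n - 1) * numPairings (n - 2) := by
  match n, hn with
  | 1, _ => rfl
  | _ + 2, _ => rfl

lemma hasDerivAt_gaussianPDFReal (μ : ℝ) (v : NNReal) (x : ℝ) :
    HasDerivAt (gaussianPDFReal μ v) (-(x - μ) / v * gaussianPDFReal μ v x) x := by
  have hexp : HasDerivAt (fun y : ℝ => -(y - μ) ^ 2 / (2 * v)) (-(x - μ) / v) x :=
    (((hasDerivAt_id x).sub_const μ).pow 2 |>.neg.div_const (2 * v)).congr_deriv (by norm_num; ring)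
  rw [gaussianPDFReal_def]
  exact (hexp.exp.const_mul _).congr_deriv (by ring)

lemma integrable_pow_gaussianReal (μ : ℝ) (v : NNReal) (n : ℕ) :
    Integrable (fun x : ℝ => x ^ n) (gaussianReal μ v) := by
  rw [← integrable_norm_iff (by fun_prop)]
  simpa using (memLp_id_gaussianReal (μ := μ) (v := v) n).integrable_norm_pow'

lemma integrable_gaussianPDFReal_mul_pow (μ : ℝ) {v : NNReal} (hv : v ≠ 0) (n : ℕ) :
    Integrable fun x => gaussianPDFReal μ v x * x ^ n := by
  have h := integrable_pow_gaussianReal μ v n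
  rw [gaussianReal_of_var_ne_zero μ hv,
    integrable_withDensity_iff_integrable_smul' (measurable_gaussianPDF μ v)
      (ae_of_all _ fun _ => gaussianPDF_lt_top)] at h
  simpa using h

/-- Stein's identity `E[X f(X)] = E[f'(X)]` for `f(x) = x ^ (n + 1)`: integrate the derivative
of `φ(x) x ^ (n + 1)`, where `φ' = -x φ`. -/
lemma integral_pow_add_two_gaussianReal (n : ℕ) :
    ∫ x, x ^ (n + 2) ∂gaussianReal 0 1 = (n + 1) * ∫ x, x ^ n ∂gaussianReal 0 1 := by
  simp only [integral_gaussianReal_eq_integral_smul one_ne_zero, smul_eq_mul]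
  set φ := gaussianPDFReal 0 1
  have hint (m : ℕ) : Integrable fun x => φ x * x ^ m :=
    integrable_gaussianPDFReal_mul_pow 0 one_ne_zero m
  have hderiv (x : ℝ) : HasDerivAt (fun x => φ x * x ^ (n + 1))
      ((n + 1) * (φ x * x ^ n) - φ x * x ^ (n + 2)) x :=
    ((hasDerivAt_gaussianPDFReal 0 1 x).mul (hasDerivAt_pow (n + 1) x)).congr_deriv
      (by push_cast; ring)
  have h := integral_eq_zero_of_hasDerivAt_of_integrable hderiv
    (((hint n).const_mul _).sub (hint (n + 2))) (hint (n + 1))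
  rw [integral_sub ((hint n).const_mul _) (hint (n + 2)), integral_const_mul, sub_eq_zero] at h
  exact h.symm

lemma integral_pow_gaussianReal (n : ℕ) : ∫ x, x ^ n ∂gaussianReal 0 1 = numPairings n := by
  match n with
  | 0 => simp [numPairings]
  | 1 => simp [numPairings, integral_id_gaussianReal]
  | n + 2 =>
    rw [integral_pow_add_two_gaussianReal, integral_pow_gaussianReal n, numPairings]
    push_cast
    ring

theorem integral_prod_apply_gaussianReal {ι κ : Type*} [Fintype ι] [Fintype κ] [DecidableEq κ]
    (p : ι → κ) :
    ∫ ω, ∏ ℓ, ω (p ℓ) ∂(Measure.pi fun _ : κ => gaussianReal 0 1) =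
      ∏ q, (numPairings #{ℓ | p ℓ = q} : ℝ) := by
  simp_rw [← prod_fiberwise' univ p, prod_const]
  rw [integral_fintype_prod_eq_prod (fun q x => x ^ #{ℓ | p ℓ = q})]
  simp_rw [integral_pow_gaussianReal]

section Pairings

variable {ι α : Type*} [DecidableEq ι] {p : ι → α} {s : Finset ι} {x y : ι}

lemma apply_swap_apply (hp : p x = p y) (z : ι) : p (swap x y z) = p z := by
  rw [swap_apply_def]
  split_ifs <;> subst_vars <;> simp [hp]

variable [DecidableEq α]

lemma card_filter_erase_erase (hx : x ∈ s) (hy : y ∈ s) (hxy : x ≠ y) (hp : p x = p y)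
    (q : α) :
    #{z ∈ (s.erase x).erase y | p z = q} =
      if q = p x then #{z ∈ s | p z = q} - 2 else #{z ∈ s | p z = q} := by
  rw [filter_erase, filter_erase]
  split_ifs with hq
  · subst hq
    rw [card_erase_of_mem (by simp [hy, hxy.symm, hp]), card_erase_of_mem (by simp [hx]),
      Nat.sub_sub]
  · rw [erase_eq_of_notMem (by simp [← hp, Ne.symm hq]),
      erase_eq_of_notMem (by simp [Ne.symm hq])]

variable [Fintype ι]

variable (p s) in
/-- The pairings of `s` whose pairs lie in fibres of `p`, each encoded as the involution of `ι`
that swaps the two points of every pair and fixes everything outside `s`. -/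
def compatiblePairings : Finset (Perm ι) :=
  {σ | σ * σ = 1 ∧ σ.support = s ∧ ∀ x, p (σ x) = p x}

lemma mem_compatiblePairings {σ : Perm ι} :
    σ ∈ compatiblePairings p s ↔ σ * σ = 1 ∧ σ.support = s ∧ ∀ x, p (σ x) = p x := by
  simp [compatiblePairings]

lemma compatiblePairings_empty : compatiblePairings p ∅ = {1} := by
  ext σ
  rw [mem_compatiblePairings, Perm.support_eq_empty_iff, mem_singleton]
  exact ⟨fun h => h.2.1, by rintro rfl; simp⟩

lemma swap_mul_mem_compatiblePairings {σ : Perm ι} (hx : x ∈ s) (hy : y ∈ s) (hxy : x ≠ y)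
    (hp : p x = p y) (hσ : σ ∈ compatiblePairings p ((s.erase x).erase y)) :
    swap x y * σ ∈ compatiblePairings p s := by
  obtain ⟨hinv, hsupp, hcompat⟩ := mem_compatiblePairings.mp hσ
  have hdisj : Perm.Disjoint (swap x y) σ := by
    rw [Perm.disjoint_iff_disjoint_support, Perm.support_swap hxy, hsupp]
    simp [disjoint_left]
  refine mem_compatiblePairings.mpr ⟨?_, ?_, fun z => ?_⟩
  · rw [hdisj.commute.symm.mul_mul_mul_comm, swap_mul_self, hinv, mul_one]
  · rw [hdisj.support_mul, Perm.support_swap hxy, hsupp, insert_union, singleton_union,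
      insert_erase (mem_erase.mpr ⟨hxy.symm, hy⟩), insert_erase hx]
  · rw [Perm.mul_apply, apply_swap_apply hp, hcompat]

lemma swap_mul_mem_compatiblePairings_erase {τ : Perm ι} (hxy : x ≠ y)
    (hτ : τ ∈ compatiblePairings p s) (hτx : τ x = y) :
    swap x y * τ ∈ compatiblePairings p ((s.erase x).erase y) := by
  obtain ⟨hinv, hsupp, hcompat⟩ := mem_compatiblePairings.mp hτ
  have hτy : τ y = x := by rw [← hτx, ← Perm.mul_apply, hinv, Perm.one_apply]
  have hcomm : Commute τ (swap x y) := by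
    rw [Commute, SemiconjBy, mul_swap_eq_swap_mul, hτx, hτy, swap_comm]
  have hp : p x = p y := by rw [← hτx, hcompat]
  refine mem_compatiblePairings.mpr ⟨?_, ?_, fun z => ?_⟩
  · rw [hcomm.mul_mul_mul_comm, swap_mul_self, hinv, mul_one]
  · ext z
    rw [Perm.mem_support, Perm.mul_apply, Ne, swap_apply_eq_iff, mem_erase, mem_erase, ← hsupp,
      Perm.mem_support]
    rcases eq_or_ne z x with rfl | hzx
    · simp [hτx]
    rcases eq_or_ne z y with rfl | hzy
    · simp [hτy]
    rw [swap_apply_of_ne_of_ne hzx hzy]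
    simp [hzx, hzy]
  · rw [Perm.mul_apply, apply_swap_apply hp, hcompat]

lemma card_compatiblePairings_filter_apply_eq (hx : x ∈ s) (hy : y ∈ s) (hxy : x ≠ y)
    (hp : p x = p y) :
    #{τ ∈ compatiblePairings p s | τ x = y} =
      #(compatiblePairings p ((s.erase x).erase y)) := by
  refine card_nbij' (swap x y * ·) (swap x y * ·) (fun τ hτ => ?_) (fun σ hσ => ?_)
    (fun τ _ => swap_mul_self_mul x y τ) (fun σ _ => swap_mul_self_mul x y σ)
  · rw [coe_filter] at hτ
    exact swap_mul_mem_compatiblePairings_erase hxy hτ.1 hτ.2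
  · have hσx : x ∉ σ.support := by
      rw [(mem_compatiblePairings.mp hσ).2.1]
      simp
    rw [coe_filter]
    refine ⟨swap_mul_mem_compatiblePairings hx hy hxy hp hσ, ?_⟩
    simp [Perm.notMem_support.mp hσx]

variable [Fintype α]

/-- Split according to the partner of a point `x ∈ s`, which ranges over the other `c - 1` points
of the fibre of `p x`; this is the recursion `numPairings c = (c - 1) * numPairings (c - 2)`. -/
theorem card_compatiblePairings (s : Finset ι) :
    #(compatiblePairings p s) = ∏ q, numPairings #{x ∈ s | p x = q} := by
  induction s using Finset.strongInduction with
  | H s ih =>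
  obtain rfl | ⟨x, hx⟩ := s.eq_empty_or_nonempty
  · simp [compatiblePairings_empty, numPairings]
  set F := {y ∈ s | p y = p x}
  have hxF : x ∈ F := mem_filter.mpr ⟨hx, rfl⟩
  have hmaps : (compatiblePairings p s : Set (Perm ι)).MapsTo (· x) (F.erase x) := by
    intro τ hτ
    obtain ⟨-, hsupp, hcompat⟩ := mem_compatiblePairings.mp hτ
    have hxτ : x ∈ τ.support := hsupp ▸ hx
    simp [F, Perm.mem_support.mp hxτ, hcompat, ← hsupp]
  have hterm : ∀ y ∈ F.erase x, #{τ ∈ compatiblePairings p s | τ x = y} =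
      numPairings (#F - 2) * ∏ q ∈ univ.erase (p x), numPairings #{z ∈ s | p z = q} := by
    intro y hyF
    obtain ⟨hyx, hys, hpy⟩ : y ≠ x ∧ y ∈ s ∧ p y = p x := by simpa [F] using hyF
    rw [card_compatiblePairings_filter_apply_eq hx hys hyx.symm hpy.symm,
      ih _ ((erase_ssubset (mem_erase.mpr ⟨hyx, hys⟩)).trans (erase_ssubset hx)),
      ← mul_prod_erase _ _ (mem_univ (p x)),
      card_filter_erase_erase hx hys hyx.symm hpy.symm, if_pos rfl]
    congr 1
    refine prod_congr rfl fun q hq => ?_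
    rw [card_filter_erase_erase hx hys hyx.symm hpy.symm, if_neg (ne_of_mem_erase hq)]
  rw [card_eq_sum_card_fiberwise hmaps, sum_congr rfl hterm, sum_const, card_erase_of_mem hxF,
    smul_eq_mul, ← mul_assoc, ← numPairings_eq_mul (card_ne_zero_of_mem hxF),
    ← mul_prod_erase _ _ (mem_univ (p x))]

end Pairings

lemma filter_fpfInvolutions_eq {n : ℕ} {α : Type*} [DecidableEq α] (p : Fin n → α) :
    {σ ∈ fpfInvolutions n | ∀ x, p (σ x) = p x} = compatiblePairings p univ := by
  ext σ
  simp [fpfInvolutions, mem_compatiblePairings, eq_univ_iff_forall, and_assoc]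

/-- Wick formula for a standard real Gaussian matrix: the `2k`-th moments are sums over pairings
(fixed-point-free involutions) of products of Kronecker deltas on row and column indices. -/
theorem real_gaussian_matrix_moment {d₁ d₂ k : ℕ}
    (i : Fin (2 * k) → Fin d₁) (j : Fin (2 * k) → Fin d₂) :
    ∫ ω : Fin d₁ × Fin d₂ → ℝ, ∏ ℓ, ω (i ℓ, j ℓ) ∂(realGaussianMat d₁ d₂)
      = ∑ σ ∈ fpfInvolutions (2 * k), ∏ x,
          (if i x = i (σ x) then (1 : ℝ) else 0) * (if j x = j (σ x) then (1 : ℝ) else 0) := by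
  set p : Fin (2 * k) → Fin d₁ × Fin d₂ := fun ℓ => (i ℓ, j ℓ)
  have hdelta (σ : Perm (Fin (2 * k))) (x : Fin (2 * k)) :
      (if i x = i (σ x) then (1 : ℝ) else 0) * (if j x = j (σ x) then (1 : ℝ) else 0) =
        if p (σ x) = p x then 1 else 0 := by
    rw [ite_zero_mul_ite_zero, one_mul]
    simp [p, Prod.ext_iff, eq_comm]
  simp only [hdelta, prod_boole, mem_univ, forall_const, sum_boole, filter_fpfInvolutions_eq,
    card_compatiblePairings]
  rw [realGaussianMat, integral_prod_apply_gaussianReal p, Nat.cast_prod]
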